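/- Let X, Y be compact Hausdorff spaces, |X| > 1, and let c be a cross ({r} × Y) ∪ (X × {a}) which is a quasi-homeomorphism (a Vietoris limit of graphs of homeomorphisms X → Y). Then r is a non-isolated point of X and a is a non-isolated point of Y. -/

import Mathlib

open Topology

/-- The hyperspace of closed subsets of a topological space. -/
def ClosedSubsets (Z : Type*) [TopologicalSpace Z] := {s : Set Z // IsClosed s}

/-- The Vietoris topology on the hyperspace of closed subsets. -/
instance ClosedSubsets.instTopologicalSpace (Z : Type*) [TopologicalSpace Z] :
    TopologicalSpace (ClosedSubsets Z) :=
  TopologicalSpace.generateFrom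
    ({A | ∃ o : Set Z, IsOpen o ∧ A = {c : ClosedSubsets Z | c.val ⊆ o}} ∪
     {A | ∃ o : Set Z, IsOpen o ∧ A = {c : ClosedSubsets Z | (c.val ∩ o).Nonempty}})

/-- The graph of a homeomorphism, as a closed subset of `X × Y`. -/
def homeoGraph {X Y : Type*} [TopologicalSpace X] [TopologicalSpace Y] [T2Space Y]
    (φ : X ≃ₜ Y) : ClosedSubsets (X × Y) :=
  ⟨{p : X × Y | p.2 = φ p.1}, isClosed_eq continuous_snd (φ.continuous.comp continuous_fst)⟩

/-- The cross with repeller `r` and attractor `a`, as a closed subset of `X × Y`. -/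
def crossClosed {X Y : Type*} [TopologicalSpace X] [TopologicalSpace Y]
    [T1Space X] [T1Space Y] (r : X) (a : Y) : ClosedSubsets (X × Y) :=
  ⟨({r} ×ˢ (Set.univ : Set Y)) ∪ ((Set.univ : Set X) ×ˢ {a}),
    (isClosed_singleton.prod isClosed_univ).union (isClosed_univ.prod isClosed_singleton)⟩

/-!
If `r` were isolated, `{r} × V` would be open for every open `V ⊆ Y`. Choosing disjoint open
`V₁ ∋ a` and `V₂ ∋ y` with `y ≠ a`, the cross meets both `{r} × V₁` and `{r} × V₂`, so a
Vietoris-nearby graph of a homeomorphism `φ` does too, forcing `φ r ∈ V₁ ∩ V₂ = ∅`.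
Symmetrically, if `a` were isolated, a graph near the cross would meet `U₁ × {a}` and
`U₂ × {a}` for disjoint `U₁, U₂`, contradicting injectivity of `φ`. Two points `x ≠ y` exist in
`X` by hypothesis, and in `Y` because some homeomorphism `X ≃ₜ Y` exists.
-/

open Set

namespace ClosedSubsets

variable {Z : Type*} [TopologicalSpace Z]

theorem isOpen_setOf_inter_nonempty {o : Set Z} (ho : IsOpen o) :
    IsOpen {c : ClosedSubsets Z | (c.val ∩ o).Nonempty} :=
  .basic _ (Or.inr ⟨o, ho, rfl⟩)

theorem exists_inter_nonempty_of_mem_closure {S : Set (ClosedSubsets Z)} {c : ClosedSubsets Z}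
    (hc : c ∈ closure S) {o₁ o₂ : Set Z} (ho₁ : IsOpen o₁) (ho₂ : IsOpen o₂)
    (h₁ : (c.val ∩ o₁).Nonempty) (h₂ : (c.val ∩ o₂).Nonempty) :
    ∃ d ∈ S, (d.val ∩ o₁).Nonempty ∧ (d.val ∩ o₂).Nonempty := by
  obtain ⟨d, ⟨hd₁, hd₂⟩, hdS⟩ := mem_closure_iff.mp hc _
    ((isOpen_setOf_inter_nonempty ho₁).inter (isOpen_setOf_inter_nonempty ho₂)) ⟨h₁, h₂⟩
  exact ⟨d, hdS, hd₁, hd₂⟩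

end ClosedSubsets

section Graphs

variable {X Y : Type*} [TopologicalSpace X] [TopologicalSpace Y]

theorem homeoGraph_inter_singleton_prod_nonempty_iff [T2Space Y] (φ : X ≃ₜ Y) (r : X)
    (V : Set Y) : ((homeoGraph φ).val ∩ {r} ×ˢ V).Nonempty ↔ φ r ∈ V := by
  constructor
  · rintro ⟨⟨x, y⟩, hxy, rfl, hy⟩
    exact (hxy : y = φ x) ▸ hy
  · exact fun h ↦ ⟨(r, φ r), rfl, rfl, h⟩

theorem homeoGraph_inter_prod_singleton_nonempty_iff [T2Space Y] (φ : X ≃ₜ Y) (U : Set X)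
    (a : Y) : ((homeoGraph φ).val ∩ U ×ˢ {a}).Nonempty ↔ φ.symm a ∈ U := by
  constructor
  · rintro ⟨⟨x, y⟩, hxy, hx, rfl⟩
    rwa [show y = φ x from hxy, φ.symm_apply_apply]
  · exact fun h ↦ ⟨(φ.symm a, a), (φ.apply_symm_apply a).symm, h, rfl⟩

variable [T1Space X] [T1Space Y]

theorem crossClosed_inter_singleton_prod_nonempty {r : X} {a : Y} {V : Set Y} {y : Y}
    (hy : y ∈ V) : ((crossClosed r a).val ∩ {r} ×ˢ V).Nonempty :=
  ⟨(r, y), Or.inl ⟨rfl, trivial⟩, rfl, hy⟩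

theorem crossClosed_inter_prod_singleton_nonempty {r : X} {a : Y} {U : Set X} {x : X}
    (hx : x ∈ U) : ((crossClosed r a).val ∩ U ×ˢ {a}).Nonempty :=
  ⟨(x, a), Or.inr ⟨trivial, rfl⟩, hx, rfl⟩

end Graphs

section Cross

variable {X Y : Type*} [TopologicalSpace X] [TopologicalSpace Y] [T2Space Y] {r : X} {a : Y}

theorem not_isOpen_singleton_repeller [T1Space X] [Nontrivial Y]
    (hq : crossClosed r a ∈ closure (range (homeoGraph : (X ≃ₜ Y) → _))) :
    ¬IsOpen ({r} : Set X) := by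
  intro hr
  obtain ⟨y, hy⟩ := exists_ne a
  obtain ⟨V₁, V₂, hV₁, hV₂, haV₁, hyV₂, hV⟩ := t2_separation hy.symm
  obtain ⟨_, ⟨φ, rfl⟩, h₁, h₂⟩ := ClosedSubsets.exists_inter_nonempty_of_mem_closure hq
    (hr.prod hV₁) (hr.prod hV₂) (crossClosed_inter_singleton_prod_nonempty haV₁)
    (crossClosed_inter_singleton_prod_nonempty hyV₂)
  rw [homeoGraph_inter_singleton_prod_nonempty_iff] at h₁ h₂
  exact hV.notMem_of_mem_left h₁ h₂

theorem not_isOpen_singleton_attractor [T2Space X] [Nontrivial X]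
    (hq : crossClosed r a ∈ closure (range (homeoGraph : (X ≃ₜ Y) → _))) :
    ¬IsOpen ({a} : Set Y) := by
  intro ha
  obtain ⟨x₁, x₂, hx⟩ := exists_pair_ne X
  obtain ⟨U₁, U₂, hU₁, hU₂, hxU₁, hxU₂, hU⟩ := t2_separation hx
  obtain ⟨_, ⟨φ, rfl⟩, h₁, h₂⟩ := ClosedSubsets.exists_inter_nonempty_of_mem_closure hq
    (hU₁.prod ha) (hU₂.prod ha) (crossClosed_inter_prod_singleton_nonempty hxU₁)
    (crossClosed_inter_prod_singleton_nonempty hxU₂)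
  rw [homeoGraph_inter_prod_singleton_nonempty_iff] at h₁ h₂
  exact hU.notMem_of_mem_left h₁ h₂

end Cross

theorem cross_quasi_homeomorphism_nonisolated_general
    {X Y : Type*} [TopologicalSpace X] [T2Space X]
    [TopologicalSpace Y] [T2Space Y]
    (hX : ∃ x y : X, x ≠ y) (r : X) (a : Y)
    (hq : crossClosed r a ∈ closure (Set.range (fun φ : X ≃ₜ Y => homeoGraph φ))) :
    (𝓝[≠] r).NeBot ∧ (𝓝[≠] a).NeBot := by
  have : Nontrivial X := nontrivial_iff.mpr hX
  obtain ⟨_, φ, -⟩ := closure_nonempty_iff.mp ⟨_, hq⟩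
  have : Nontrivial Y := φ.injective.nontrivial
  refine ⟨Filter.neBot_iff.mpr ?_, Filter.neBot_iff.mpr ?_⟩
  · exact mt (isOpen_singleton_iff_punctured_nhds r).mpr (not_isOpen_singleton_repeller hq)
  · exact mt (isOpen_singleton_iff_punctured_nhds a).mpr (not_isOpen_singleton_attractor hq)

/-- If `|X| > 1` and the cross with center `(r, a)` is a quasi-homeomorphism (a Vietoris limit
of graphs of homeomorphisms `X → Y`), then `r` is non-isolated in `X` and `a` is non-isolated
in `Y`. -/
theorem cross_quasi_homeomorphism_nonisolated
    {X Y : Type*} [TopologicalSpace X] [CompactSpace X] [T2Space X]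
    [TopologicalSpace Y] [CompactSpace Y] [T2Space Y]
    (hX : ∃ x y : X, x ≠ y) (r : X) (a : Y)
    (hq : crossClosed r a ∈ closure (Set.range (fun φ : X ≃ₜ Y => homeoGraph φ))) :
    (𝓝[≠] r).NeBot ∧ (𝓝[≠] a).NeBot :=
  cross_quasi_homeomorphism_nonisolated_general hX r a hq
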